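/- arXiv:1805.08392 — 4 statements merged into one kernel-verified Lean document; each statement's English description precedes it below -/
import Mathlib

section
/- Let G be a finite connected simple graph. Then the following are equivalent: (1) there exists a function ε : V(G) → {+, −} such that the ε-subgraph G_ε contains a cycle; (2) G contains a cycle of even length. -/
/-- The ε-subgraph of `G`: the spanning subgraph whose edges are the edges of `G`
whose two endpoints receive different values under `ε`. -/
def epsSubgraph {V : Type*} (G : SimpleGraph V) (ε : V → Bool) : SimpleGraph V where
  Adj u v := G.Adj u v ∧ ε u ≠ ε v
  symm := ⟨fun _ _ h => ⟨h.1.symm, h.2.symm⟩⟩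
  loopless := ⟨fun v h => G.loopless.irrefl v h.1⟩

/-!
`ε` is a proper 2-colouring of `G_ε`, so closed walks in `G_ε` have even length and map to
closed walks of `G`. Conversely, an even cycle of `G` is a copy of the even cycle graph,
which is 2-colourable; pushing such a colouring forward along the copy gives an `ε` for which
every edge of the copy lies in `G_ε`.
-/

namespace SimpleGraph

variable {V W : Type*} {G : SimpleGraph V}

lemma epsSubgraph_le (ε : V → Bool) : epsSubgraph G ε ≤ G := fun _ _ h => h.1

def epsSubgraphColoring (G : SimpleGraph V) (ε : V → Bool) : (epsSubgraph G ε).Coloring Bool :=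
  Coloring.mk ε fun h => h.2

lemma even_length_of_epsSubgraph_walk {ε : V → Bool} {u : V} (p : (epsSubgraph G ε).Walk u u) :
    Even p.length :=
  ((epsSubgraphColoring G ε).even_length_iff_congr p).mpr Iff.rfl

def Copy.toEpsSubgraph {H : SimpleGraph W} (f : H.Copy G) (c : H.Coloring Bool) :
    H.Copy (epsSubgraph G (Function.extend f c fun _ => false)) where
  toHom := ⟨f, fun {a b} h => by
    refine ⟨f.toHom.map_adj h, ?_⟩
    have hf : Function.Injective f := f.injective
    rw [hf.extend_apply, hf.extend_apply]
    exact c.valid h⟩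
  injective' := f.injective

lemma IsContained.exists_epsSubgraph {H : SimpleGraph W} (h : H ⊑ G) (c : H.Coloring Bool) :
    ∃ ε : V → Bool, H ⊑ epsSubgraph G ε :=
  let ⟨f⟩ := h
  ⟨_, ⟨f.toEpsSubgraph c⟩⟩

end SimpleGraph

open SimpleGraph in
theorem stmt0_general {V : Type*} (G : SimpleGraph V) :
    (∃ ε : V → Bool, ∃ (v : V) (w : (epsSubgraph G ε).Walk v v), w.IsCycle) ↔
      ∃ (v : V) (w : G.Walk v v), w.IsCycle ∧ Even w.length := by
  constructor
  · rintro ⟨ε, v, w, hw⟩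
    refine ⟨v, w.mapLe (epsSubgraph_le ε), hw.mapLe _, ?_⟩
    simpa using even_length_of_epsSubgraph_walk w
  · rintro ⟨v, w, hw, heven⟩
    have hlen : 2 < w.length := hw.three_le_length
    have hcopy : cycleGraph w.length ⊑ G := (cycleGraph_isContained_iff hlen).mpr ⟨v, w, hw, rfl⟩
    obtain ⟨ε, hε⟩ := hcopy.exists_epsSubgraph (cycleGraph.bicoloring_of_even _ heven)
    obtain ⟨u, p, hp, -⟩ := (cycleGraph_isContained_iff hlen).mp hε
    exact ⟨ε, u, p, hp⟩

theorem stmt0 {V : Type*} [Fintype V] (G : SimpleGraph V) (hG : G.Connected) :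
    (∃ ε : V → Bool, ∃ (v : V) (w : (epsSubgraph G ε).Walk v v), w.IsCycle) ↔
      ∃ (v : V) (w : G.Walk v v), w.IsCycle ∧ Even w.length :=
  stmt0_general G
end

section
/- For every positive integer m, twice the sum, over all compositions (c_1, …, c_k) of m, of the product Catalan(c_1) · Catalan(c_2) ⋯ Catalan(c_k), equals binom(2m, m). -/
/-!
Write `S`, `C` and `B` for the generating functions of the composition sums, of the Catalan
numbers and of the central binomial coefficients, and `C' = (C - 1) / X`. Splitting off the first
block of a composition gives `S = 1 + X C' S`, so `2 S = 2 + X C' (2 S)`. On the other side,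
`C = 1 + X C²` turns `C B` into a solution of `J = B + X C J`, and induction on the coefficients
gives `2 X C B = B - 1`; combined with `B (n + 1) + 2 catalan n = 4 B n` this shows that `1 + B`
solves the same equation `F = 2 + X C' F`. Its solution is unique, so `2 S = 1 + B`.
-/

open Finset PowerSeries Nat

namespace Composition

instance : Unique (Composition 0) where
  uniq c := Composition.ext <| by
    rw [c.blocks_eq_nil.2 rfl, (default : Composition 0).blocks_eq_nil.2 rfl]

def consBlock (n : ℕ) (p : Σ i : Fin (n + 1), Composition (n - i)) : Composition (n + 1) where
  blocks := (p.1 + 1) :: p.2.blocks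
  blocks_pos := by
    rintro j (_ | ⟨_, hj⟩)
    exacts [Nat.succ_pos _, p.2.blocks_pos hj]
  blocks_sum := by
    rw [List.sum_cons, p.2.blocks_sum]
    have := p.1.isLt
    omega

theorem consBlock_bijective (n : ℕ) : Function.Bijective (consBlock n) := by
  constructor
  · rintro ⟨⟨i, hi⟩, c⟩ ⟨⟨j, hj⟩, d⟩ h
    obtain ⟨hij, hcd⟩ := List.cons.inj (congrArg blocks h)
    obtain rfl : i = j := by simpa using hij
    obtain rfl : c = d := Composition.ext hcd
    rfl
  · rintro ⟨_ | ⟨a, l⟩, hpos, hsum⟩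
    · simp at hsum
    · have ha : 0 < a := hpos List.mem_cons_self
      rw [List.sum_cons] at hsum
      have hl : l.sum = n - (a - 1) := by omega
      refine ⟨⟨⟨a - 1, by omega⟩, ⟨l, fun h => hpos (.tail _ h), hl⟩⟩, ?_⟩
      apply Composition.ext
      simp only [consBlock]
      congr 1
      omega

theorem sum_prod_map_blocks_succ {R : Type*} [Semiring R] (f : ℕ → R) (n : ℕ) :
    ∑ c : Composition (n + 1), (c.blocks.map f).prod
      = ∑ p ∈ antidiagonal n, f (p.1 + 1) * ∑ c : Composition p.2, (c.blocks.map f).prod := by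
  rw [← Fintype.sum_bijective _ (consBlock_bijective n) _ _ fun _ => rfl,
    Nat.sum_antidiagonal_eq_sum_range_succ_mk, sum_range, ← univ_sigma_univ, sum_sigma]
  simp [consBlock, mul_sum]

end Composition

namespace PowerSeries

theorem eq_of_eq_add_X_mul {R : Type*} [Semiring R] {P A F G : R⟦X⟧}
    (hF : F = P + X * (A * F)) (hG : G = P + X * (A * G)) : F = G := by
  ext n
  induction n using Nat.strong_induction_on with | _ n ih
  rcases n with _ | n
  · rw [hF, hG]
    simp
  · rw [hF, hG, map_add, map_add, coeff_succ_X_mul, coeff_succ_X_mul, coeff_mul, coeff_mul]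
    congr 1
    refine sum_congr rfl fun p hp => ?_
    rw [ih p.2 (Nat.antidiagonal.snd_lt hp)]

theorem mk_sum_prod_map_blocks {R : Type*} [Semiring R] (f : ℕ → R) :
    mk (fun n => ∑ c : Composition n, (c.blocks.map f).prod)
      = 1 + X * (mk (fun n => f (n + 1)) *
          mk fun n => ∑ c : Composition n, (c.blocks.map f).prod) := by
  ext (_ | n)
  · simp [(default : Composition 0).blocks_eq_nil.2 rfl]
  · rw [coeff_mk, map_add, coeff_succ_X_mul, coeff_mul, Composition.sum_prod_map_blocks_succ]
    simp

end PowerSeries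

theorem Nat.centralBinom_succ_add_two_mul_catalan (n : ℕ) :
    centralBinom (n + 1) + 2 * catalan n = 4 * centralBinom n := by
  refine Nat.eq_of_mul_eq_mul_left n.succ_pos ?_
  calc (n + 1) * (centralBinom (n + 1) + 2 * catalan n)
      = (n + 1) * centralBinom (n + 1) + 2 * ((n + 1) * catalan n) := by ring
    _ = (n + 1) * (4 * centralBinom n) := by
      rw [succ_mul_centralBinom_succ, succ_mul_catalan_eq_centralBinom]
      ring

namespace PowerSeries

theorem two_mul_coeff_catalanSeries_mul_centralBinom (n : ℕ) :
    2 * coeff n (catalanSeries * mk centralBinom) = centralBinom (n + 1) := by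
  induction n using Nat.strong_induction_on with | _ n ih
  set J := catalanSeries * mk centralBinom with hJdef
  rcases n with _ | n
  · simp [J, coeff_mul, centralBinom]
  have hJ : J = mk centralBinom + X * (catalanSeries * J) := by
    rw [hJdef]
    conv_lhs => rw [← catalanSeries_sq_mul_X_add_one]
    ring
  have h_rec : coeff (n + 1) J
      = centralBinom (n + 1) + ∑ p ∈ antidiagonal n, catalan p.1 * coeff p.2 J := by
    conv_lhs => rw [hJ]
    rw [map_add, coeff_succ_X_mul, coeff_mul]
    simp
  have h_ih : 2 * ∑ p ∈ antidiagonal n, catalan p.1 * coeff p.2 J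
      = ∑ p ∈ antidiagonal n, catalan p.1 * centralBinom (p.2 + 1) := by
    rw [mul_sum]
    refine sum_congr rfl fun p hp => ?_
    rw [mul_left_comm, ih p.2 (Nat.antidiagonal.snd_lt hp)]
  have h_shift : coeff (n + 1) J
      = ∑ p ∈ antidiagonal n, catalan p.1 * centralBinom (p.2 + 1) + catalan (n + 1) := by
    simp [J, coeff_mul, Nat.sum_antidiagonal_succ', add_comm]
  have := centralBinom_succ_add_two_mul_catalan (n + 1)
  omega

theorem mk_centralBinom_eq :
    mk centralBinom = 1 + X * (mk (fun n => catalan (n + 1)) * (1 + mk centralBinom)) := by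
  ext (_ | n)
  · simp
  have hJ := two_mul_coeff_catalanSeries_mul_centralBinom (n + 1)
  have hK := centralBinom_succ_add_two_mul_catalan (n + 1)
  rw [coeff_mul, Nat.sum_antidiagonal_succ] at hJ
  rw [map_add, coeff_succ_X_mul, mul_add, map_add, mul_one, coeff_mul]
  simp at hJ ⊢
  omega

theorem two_mul_mk_sum_prod_map_catalan :
    2 * mk (fun n => ∑ c : Composition n, (c.blocks.map catalan).prod) = 1 + mk centralBinom := by
  refine eq_of_eq_add_X_mul (P := 2) (A := mk fun n => catalan (n + 1)) ?_ ?_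
  · conv_lhs => rw [mk_sum_prod_map_blocks]
    ring
  · conv_lhs => rw [mk_centralBinom_eq]
    ring

end PowerSeries

theorem stmt13 (m : ℕ) (hm : 0 < m) :
    2 * ∑ c : Composition m, (c.blocks.map catalan).prod = Nat.choose (2 * m) m := by
  have h := congrArg (coeff m) two_mul_mk_sum_prod_map_catalan
  rw [two_mul, map_add, coeff_mk, map_add, coeff_one, if_neg hm.ne', coeff_mk] at h
  rw [← centralBinom_eq_two_mul_choose]
  omega
end

section
/- For every positive integer m, twice the sum, over all compositions (c_1, …, c_k) of m, of the product Catalan(c_1 + 1) · Catalan(c_2) ⋯ Catalan(c_k), equals binom(2m + 2, m + 1) − binom(2m, m). -/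
open Finset

namespace Stmt14Aux

lemma cb_rec (n : ℕ) :
    Nat.centralBinom (n + 1) + 2 * catalan n = 4 * Nat.centralBinom n := by
  have h1 := Nat.succ_mul_centralBinom_succ n
  have h2 := succ_mul_catalan_eq_centralBinom n
  have key : (n + 1) * (Nat.centralBinom (n + 1) + 2 * catalan n) =
      (n + 1) * (4 * Nat.centralBinom n) := by
    have h2' : (n + 1) * (2 * catalan n) = 2 * Nat.centralBinom n := by
      rw [← h2]; ring
    rw [mul_add, h1, h2']; ring
  exact Nat.eq_of_mul_eq_mul_left (Nat.succ_pos n) key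

lemma catalan_conv (n : ℕ) :
    ∑ i ∈ range (n + 1), catalan i * catalan (n - i) = catalan (n + 1) := by
  rw [catalan_succ n]
  exact (Fin.sum_univ_eq_sum_range (fun i => catalan i * catalan (n - i)) (n + 1)).symm

lemma cb_zero : Nat.centralBinom 0 = 1 := by simp [Nat.centralBinom]

lemma conv (n : ℕ) :
    2 * ∑ i ∈ range (n + 1), catalan i * Nat.centralBinom (n - i) =
      Nat.centralBinom (n + 1) := by
  induction n with
  | zero =>
    rw [sum_range_one, catalan_zero, one_mul, Nat.sub_zero, cb_zero]
    decide
  | succ n ih =>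
    have hshift : ∑ i ∈ range (n + 1), catalan i * Nat.centralBinom (n + 1 - i) +
        2 * ∑ i ∈ range (n + 1), catalan i * catalan (n - i) =
        4 * ∑ i ∈ range (n + 1), catalan i * Nat.centralBinom (n - i) := by
      rw [mul_sum, mul_sum, ← sum_add_distrib]
      refine sum_congr rfl fun i hi => ?_
      have hi' : i ≤ n := by simpa using Nat.lt_succ_iff.mp (mem_range.mp hi)
      have he : n + 1 - i = (n - i) + 1 := by omega
      rw [he, ← mul_assoc, mul_comm 2 (catalan i), mul_assoc, ← mul_add,
        ← mul_assoc, mul_comm 4 (catalan i), mul_assoc, cb_rec (n - i)]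
    rw [catalan_conv] at hshift
    rw [sum_range_succ]
    have hK := cb_rec (n + 1)
    simp only [Nat.sub_self, cb_zero, mul_one]
    omega

/-- prepend a block `1`. -/
def cons1 {m : ℕ} (c : Composition m) : Composition (m + 1) :=
  ⟨1 :: c.blocks,
   by intro i hi
      rcases List.mem_cons.mp hi with h | h
      · omega
      · exact c.blocks_pos h,
   by simp only [List.sum_cons, c.blocks_sum]; omega⟩

lemma blocks_ne_nil {m : ℕ} (hm : 0 < m) (c : Composition m) : c.blocks ≠ [] := by
  intro h
  have hs := c.blocks_sum
  rw [h] at hs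
  simp at hs
  omega

/-- increment the first block. -/
def incr {m : ℕ} (hm : 0 < m) (c : Composition m) : Composition (m + 1) :=
  ⟨(c.blocks.head! + 1) :: c.blocks.tail,
   by intro i hi
      rcases List.mem_cons.mp hi with h | h
      · omega
      · exact c.blocks_pos (List.mem_of_mem_tail h),
   by have h := List.cons_head!_tail (blocks_ne_nil hm c)
      have hs : (c.blocks.head! :: c.blocks.tail).sum = m := by rw [h, c.blocks_sum]
      simp only [List.sum_cons] at hs ⊢
      omega⟩

def g {m : ℕ} (hm : 0 < m) : Composition m ⊕ Composition m → Composition (m + 1)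
  | .inl c => cons1 c
  | .inr c => incr hm c

lemma g_inj {m : ℕ} (hm : 0 < m) : Function.Injective (g hm) := by
  rintro (c | c) (d | d) h <;> have hb := congrArg Composition.blocks h
  · change 1 :: c.blocks = 1 :: d.blocks at hb
    simp only [List.cons.injEq, true_and] at hb
    exact congrArg Sum.inl (Composition.ext hb)
  · change 1 :: c.blocks = (d.blocks.head! + 1) :: d.blocks.tail at hb
    have hpos : 0 < d.blocks.head! :=
      d.blocks_pos (List.head!_mem_self (blocks_ne_nil hm d))
    simp only [List.cons.injEq] at hb
    omega
  · change (c.blocks.head! + 1) :: c.blocks.tail = 1 :: d.blocks at hb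
    have hpos : 0 < c.blocks.head! :=
      c.blocks_pos (List.head!_mem_self (blocks_ne_nil hm c))
    simp only [List.cons.injEq] at hb
    omega
  · change (c.blocks.head! + 1) :: c.blocks.tail = (d.blocks.head! + 1) :: d.blocks.tail at hb
    simp only [List.cons.injEq] at hb
    have hbl : c.blocks = d.blocks := by
      rw [← List.cons_head!_tail (blocks_ne_nil hm c),
        ← List.cons_head!_tail (blocks_ne_nil hm d)]
      rw [show c.blocks.head! = d.blocks.head! by omega, hb.2]
    exact congrArg Sum.inr (Composition.ext hbl)

lemma g_bij {m : ℕ} (hm : 0 < m) : Function.Bijective (g hm) := by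
  refine (Fintype.bijective_iff_injective_and_card _).2 ⟨g_inj hm, ?_⟩
  rw [Fintype.card_sum, composition_card, composition_card]
  obtain ⟨k, rfl⟩ : ∃ k, m = k + 1 := ⟨m - 1, by omega⟩
  rw [Nat.add_sub_cancel, Nat.add_sub_cancel, pow_succ]
  ring

noncomputable def splitEquiv {m : ℕ} (hm : 0 < m) :
    Composition m ⊕ Composition m ≃ Composition (m + 1) :=
  Equiv.ofBijective (g hm) (g_bij hm)

/-- The weighted sum over compositions. -/
def G (w : ℕ → ℕ) (m : ℕ) : ℕ :=
  ∑ c : Composition m, w c.blocks.head! * (c.blocks.tail.map catalan).prod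

lemma G_congr {w w' : ℕ → ℕ} (h : ∀ b, w b = w' b) (m : ℕ) : G w m = G w' m := by
  unfold G; exact sum_congr rfl fun c _ => by rw [h]

lemma G_one (w : ℕ → ℕ) : G w 1 = w 1 := by
  have huniq : ∀ c : Composition 1, c = Composition.ones 1 := by
    intro c
    rw [Composition.eq_ones_iff]
    intro i hi
    have h1 : 0 < i := c.blocks_pos hi
    have h2 : i ≤ c.blocks.sum := List.single_le_sum (fun j _ => Nat.zero_le j) i hi
    rw [c.blocks_sum] at h2
    omega
  have hterm : ∀ c : Composition 1,
      w c.blocks.head! * (c.blocks.tail.map catalan).prod = w 1 := by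
    intro c
    rw [huniq c, Composition.ones_blocks]
    simp [List.replicate_succ]
  unfold G
  rw [sum_congr rfl (fun c _ => hterm c), sum_const, Finset.card_univ, composition_card]
  simp

lemma G_split (w : ℕ → ℕ) {m : ℕ} (hm : 0 < m) :
    G w (m + 1) = w 1 * G catalan m + G (fun b => w (b + 1)) m := by
  unfold G
  rw [← Equiv.sum_comp (splitEquiv hm)
    (fun c => w c.blocks.head! * (c.blocks.tail.map catalan).prod), Fintype.sum_sum_type]
  congr 1
  rw [mul_sum]
  refine sum_congr rfl fun c _ => ?_
  have hne := blocks_ne_nil hm c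
  show w ((1 :: c.blocks).head!) * (((1 :: c.blocks).tail).map catalan).prod = _
  simp only [List.head!_cons, List.tail_cons]
  have hp : (c.blocks.map catalan).prod =
      catalan c.blocks.head! * ((c.blocks.tail.map catalan)).prod := by
    conv_lhs => rw [← List.cons_head!_tail hne]
    simp
  rw [hp]

/-- main strengthened identity. -/
lemma main {m : ℕ} (hm : 0 < m) : ∀ j : ℕ,
    2 * G (fun b => catalan (b + j)) m +
      ∑ i ∈ range j, catalan (i + 1) * Nat.centralBinom (m + j - 1 - i) =
    Nat.centralBinom (m + j) := by
  induction m, hm using Nat.le_induction with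
  | base =>
    intro j
    rw [G_one]
    have hidx : ∀ i ∈ range j, catalan (i + 1) * Nat.centralBinom (1 + j - 1 - i) =
        catalan (i + 1) * Nat.centralBinom (j - i) := by
      intro i hi; congr 2; omega
    rw [sum_congr rfl hidx, Nat.add_comm 1 j]
    have hX := conv (j + 1)
    have hK := cb_rec (j + 1)
    have hpeel : ∑ i ∈ range (j + 1 + 1), catalan i * Nat.centralBinom (j + 1 - i) =
        (∑ i ∈ range j, catalan (i + 1) * Nat.centralBinom (j - i)) +
          catalan (j + 1) + Nat.centralBinom (j + 1) := by
      rw [sum_range_succ' (fun i => catalan i * Nat.centralBinom (j + 1 - i)) (j + 1),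
        sum_range_succ]
      have e1 : ∀ i ∈ range j, catalan (i + 1) * Nat.centralBinom (j + 1 - (i + 1)) =
          catalan (i + 1) * Nat.centralBinom (j - i) := by
        intro i hi; congr 2; omega
      rw [sum_congr rfl e1]
      have e2 : j + 1 - (j + 1) = 0 := by omega
      rw [e2, cb_zero, mul_one, catalan_zero, one_mul]
      have e3 : j + 1 - 0 = j + 1 := by omega
      rw [e3]
    rw [hpeel] at hX
    omega
  | succ m hm ih =>
    intro j
    have hsplit := G_split (fun b => catalan (b + j)) hm
    have hcat : G catalan m = G (fun b => catalan (b + 0)) m :=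
      G_congr (fun b => by rw [Nat.add_zero]) m
    have hsh : G (fun b => catalan (b + 1 + j)) m = G (fun b => catalan (b + (j + 1))) m :=
      G_congr (fun b => by rw [Nat.add_assoc, Nat.add_comm 1 j]) m
    rw [hcat, hsh] at hsplit
    have e0 : Nat.centralBinom (m + 0) = Nat.centralBinom m := by rw [Nat.add_zero]
    have ih0 : 2 * G (fun b => catalan (b + 0)) m = Nat.centralBinom m := by
      have h := ih 0
      rw [range_zero, sum_empty, add_zero, e0] at h
      exact h
    have ihj1 := ih (j + 1)
    rw [sum_range_succ] at ihj1
    have heq1 : ∀ i ∈ range j, catalan (i + 1) * Nat.centralBinom (m + (j + 1) - 1 - i) =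
        catalan (i + 1) * Nat.centralBinom (m + 1 + j - 1 - i) := by
      intro i hi; congr 2; omega
    rw [sum_congr rfl heq1] at ihj1
    have heq2 : m + (j + 1) - 1 - j = m := by omega
    rw [heq2] at ihj1
    have heq3 : m + (j + 1) = m + 1 + j := by omega
    rw [heq3] at ihj1
    set Q := ∑ i ∈ range j, catalan (i + 1) * Nat.centralBinom (m + 1 + j - 1 - i) with hQ
    set G0 := G (fun b => catalan (b + 0)) m with hG0
    set G1 := G (fun b => catalan (b + (j + 1))) m with hG1
    rw [hsplit]
    have key : 2 * (catalan (1 + j) * G0 + G1) + Q =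
        catalan (1 + j) * (2 * G0) + (2 * G1 + Q) := by ring
    rw [key, ih0, Nat.add_comm 1 j]
    omega

end Stmt14Aux

theorem stmt14 (m : ℕ) (hm : 0 < m) :
    2 * ∑ c : Composition m,
        catalan (c.blocks.head! + 1) * (c.blocks.tail.map catalan).prod =
      Nat.choose (2 * m + 2) (m + 1) - Nat.choose (2 * m) m := by
  have h := Stmt14Aux.main hm 1
  rw [Finset.sum_range_one] at h
  have e1 : m + 1 - 1 - 0 = m := by omega
  rw [e1, show catalan (0 + 1) = 1 from catalan_one, one_mul] at h
  have hG : Stmt14Aux.G (fun b => catalan (b + 1)) m =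
      ∑ c : Composition m,
        catalan (c.blocks.head! + 1) * (c.blocks.tail.map catalan).prod := rfl
  rw [hG] at h
  have hcb1 : Nat.centralBinom (m + 1) = Nat.choose (2 * m + 2) (m + 1) := by
    unfold Nat.centralBinom; congr 1
  have hcb0 : Nat.centralBinom m = Nat.choose (2 * m) m := rfl
  rw [← hcb1, ← hcb0]
  omega
end

section
/- For every integer n ≥ 4, the following identity holds in the rational numbers: 2·binom(2n−2, n−1) − binom(2n−4, n−2) + 5·binom(2n−6, n−3) + ((3n−4)/(n−1))·binom(2n−2, n−2) + Σ_{l=4}^{n−1} ((3l−4)/(2l−2))·binom(2l−2, l−2)·binom(2n−2l, n−l) = 6·4^{n−2} − 2·binom(2n−4, n−2). -/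
open Finset Nat

lemma refl_weight (N : ℕ) :
    2 * ∑ i ∈ range (N+1), (2*i+1) * centralBinom i * centralBinom (N-i)
      = (2*N+2) * ∑ i ∈ range (N+1), centralBinom i * centralBinom (N-i) := by
  have h := sum_range_reflect (fun i => (2*i+1) * centralBinom i * centralBinom (N-i)) (N+1)
  have h2 : ∑ j ∈ range (N+1),
      (2*(N+1-1-j)+1) * centralBinom (N+1-1-j) * centralBinom (N-(N+1-1-j))
      = ∑ j ∈ range (N+1), (2*(N-j)+1) * centralBinom (N-j) * centralBinom j := by
    apply sum_congr rfl
    intro j hj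
    have hjN : j ≤ N := by simpa [Nat.lt_succ_iff] using hj
    have e1 : N+1-1-j = N - j := by omega
    have e2 : N - (N - j) = j := by omega
    rw [e1, e2]
  rw [two_mul]
  nth_rewrite 2 [← h]
  rw [h2, ← sum_add_distrib, mul_sum]
  apply sum_congr rfl
  intro j hj
  have hjN : j ≤ N := by simpa [Nat.lt_succ_iff] using hj
  obtain ⟨d, rfl⟩ : ∃ d, N = j + d := ⟨N - j, by omega⟩
  have e : j + d - j = d := by omega
  rw [e]
  ring

lemma conv1 (N : ℕ) :
    ∑ i ∈ range (N+1), centralBinom i * centralBinom (N-i) = 4^N := by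
  induction N with
  | zero => simp [centralBinom]
  | succ N ih =>
    apply Nat.eq_of_mul_eq_mul_left (show 0 < N+1 by omega)
    have step1 : (N+1) * ∑ i ∈ range (N+2), centralBinom i * centralBinom (N+1-i)
        = 2 * ∑ i ∈ range (N+2), i * centralBinom i * centralBinom (N+1-i) := by
      rw [mul_sum]
      have h := sum_range_reflect (fun i => i * centralBinom i * centralBinom (N+1-i)) (N+2)
      have h2 : ∑ j ∈ range (N+2),
          (N+2-1-j) * centralBinom (N+2-1-j) * centralBinom (N+1-(N+2-1-j))
          = ∑ j ∈ range (N+2), (N+1-j) * centralBinom (N+1-j) * centralBinom j := by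
        apply sum_congr rfl
        intro j hj
        have hjN : j ≤ N+1 := by simpa [Nat.lt_succ_iff] using hj
        have e1 : N+2-1-j = N+1-j := by omega
        have e2 : N+1-(N+1-j) = j := by omega
        rw [e1, e2]
      calc ∑ i ∈ range (N+2), (N+1) * (centralBinom i * centralBinom (N+1-i))
          = ∑ i ∈ range (N+2), (i * centralBinom i * centralBinom (N+1-i)
              + (N+1-i) * centralBinom (N+1-i) * centralBinom i) := by
            apply sum_congr rfl
            intro j hj
            have hjN : j ≤ N+1 := by simpa [Nat.lt_succ_iff] using hj
            obtain ⟨d, hd⟩ : ∃ d, N+1 = j + d := ⟨N+1-j, by omega⟩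
            rw [hd]
            have e : j + d - j = d := by omega
            rw [e]; ring
        _ = ∑ i ∈ range (N+2), i * centralBinom i * centralBinom (N+1-i)
              + ∑ j ∈ range (N+2), (N+1-j) * centralBinom (N+1-j) * centralBinom j := by
            rw [sum_add_distrib]
        _ = 2 * ∑ i ∈ range (N+2), i * centralBinom i * centralBinom (N+1-i) := by
            rw [← h2, h]; exact (two_mul _).symm
    have step2 : ∑ i ∈ range (N+2), i * centralBinom i * centralBinom (N+1-i)
        = 2 * ∑ i ∈ range (N+1), (2*i+1) * centralBinom i * centralBinom (N-i) := by
      rw [Finset.sum_range_succ' (fun i => i * centralBinom i * centralBinom (N+1-i)) (N+1)]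
      simp only [Nat.zero_mul, Nat.add_sub_cancel]
      rw [mul_sum]
      rw [Nat.add_zero]
      apply sum_congr rfl
      intro i hi
      have e : N + 1 - (i+1) = N - i := by omega
      rw [e, succ_mul_centralBinom_succ]
      ring
    calc (N+1) * ∑ i ∈ range (N+2), centralBinom i * centralBinom (N+1-i)
        = 2 * (2 * ∑ i ∈ range (N+1), (2*i+1) * centralBinom i * centralBinom (N-i)) := by
          rw [step1, step2]
      _ = 2 * ((2*N+2) * 4^N) := by rw [refl_weight, ih]
      _ = (N+1) * 4^(N+1) := by ring

lemma conv2 (N : ℕ) :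
    2 * ∑ i ∈ range (N+1), catalan i * centralBinom (N-i) = centralBinom (N+1) := by
  have h := sum_range_reflect (fun i => catalan i * centralBinom (N-i)) (N+1)
  have h2 : ∑ j ∈ range (N+1), catalan (N+1-1-j) * centralBinom (N-(N+1-1-j))
      = ∑ j ∈ range (N+1), catalan (N-j) * centralBinom j := by
    apply sum_congr rfl
    intro j hj
    have hjN : j ≤ N := by simpa [Nat.lt_succ_iff] using hj
    have e1 : N+1-1-j = N - j := by omega
    have e2 : N - (N - j) = j := by omega
    rw [e1, e2]
  have key : ∑ i ∈ range (N+1), catalan i * centralBinom (N-i)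
      + ∑ i ∈ range (N+1), catalan (N-i) * centralBinom i
      = (N+2) * ∑ i ∈ range (N+1), catalan i * catalan (N-i) := by
    rw [← sum_add_distrib, mul_sum]
    apply sum_congr rfl
    intro j hj
    have hjN : j ≤ N := by simpa [Nat.lt_succ_iff] using hj
    obtain ⟨d, hd⟩ : ∃ d, N = j + d := ⟨N - j, by omega⟩
    rw [hd]
    have e : j + d - j = d := by omega
    rw [e, ← succ_mul_catalan_eq_centralBinom, ← succ_mul_catalan_eq_centralBinom]
    ring
  calc 2 * ∑ i ∈ range (N+1), catalan i * centralBinom (N-i)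
      = ∑ i ∈ range (N+1), catalan i * centralBinom (N-i)
        + ∑ i ∈ range (N+1), catalan (N-i) * centralBinom i := by
        rw [two_mul]; rw [← h2, h]
    _ = (N+2) * ∑ i ∈ range (N+1), catalan i * catalan (N-i) := key
    _ = (N+2) * catalan (N+1) := by
        congr 1
        rw [catalan_succ, ← Finset.sum_range (fun i => catalan i * catalan (N - i))]
    _ = centralBinom (N+1) := succ_mul_catalan_eq_centralBinom (N+1)

lemma bcat (j : ℕ) (hj : 1 ≤ j) :
    catalan j + (2*j).choose (j-1) = centralBinom j := by
  apply Nat.eq_of_mul_eq_mul_left (show 0 < j+1 by omega)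
  have h1 : (j+1) * catalan j = centralBinom j := succ_mul_catalan_eq_centralBinom j
  have h2 : (j+1) * (2*j).choose (j-1) = j * centralBinom j := by
    have := Nat.choose_succ_right_eq (2*j) (j-1)
    have e1 : j - 1 + 1 = j := by omega
    have e2 : 2*j - (j-1) = j + 1 := by omega
    rw [e1, e2] at this
    rw [centralBinom_eq_two_mul_choose]
    calc (j+1) * (2*j).choose (j-1) = (2*j).choose (j-1) * (j+1) := by ring
      _ = (2*j).choose j * j := this.symm
      _ = j * (2*j).choose j := by ring
  have h3 : (j+1) * centralBinom j = centralBinom j + j * centralBinom j := by ring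
  rw [Nat.mul_add, h1, h2, h3]

lemma decomp (f : ℕ → ℕ) (N : ℕ) (hN : 3 ≤ N) :
    ∑ j ∈ range (N+1), f j
      = f 0 + f 1 + f 2 + (∑ j ∈ Finset.Icc 3 (N-1), f j) + f N := by
  rw [sum_range_succ]
  have h1 : range N = Finset.Ico 0 N := by rw [Finset.range_eq_Ico]
  have h2 : Finset.Icc 3 (N-1) = Finset.Ico 3 N := by
    rw [← Finset.Ico_add_one_right_eq_Icc]
    congr 1
    omega
  rw [h1, h2, ← Finset.sum_Ico_consecutive f (by omega : 0 ≤ 3) (by omega : 3 ≤ N)]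
  have h3 : ∑ j ∈ Finset.Ico 0 3, f j = f 0 + f 1 + f 2 := by
    rw [← Finset.range_eq_Ico]
    simp [Finset.sum_range_succ]
  rw [h3]

lemma pascal2 (k : ℕ) :
    centralBinom (k+1) = 2 * centralBinom k + 2 * (2*k).choose (k+1) := by
  rw [centralBinom_eq_two_mul_choose, centralBinom_eq_two_mul_choose]
  have e1 : 2*(k+1) = (2*k+1) + 1 := by ring
  rw [e1, Nat.choose_succ_succ]
  have e2 : (2*k+1).choose (k+1) = (2*k+1).choose k := Nat.choose_symm_half k
  have e3 : (2*k+1).choose (k+1) = (2*k).choose k + (2*k).choose (k+1) :=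
    Nat.choose_succ_succ' (2*k) k ▸ Nat.choose_succ_succ (2*k) k
  rw [← e2, e3]
  ring

theorem stmt15 (n : ℕ) (hn : 4 ≤ n) :
    2 * (Nat.choose (2 * n - 2) (n - 1) : ℚ)
      - (Nat.choose (2 * n - 4) (n - 2) : ℚ)
      + 5 * (Nat.choose (2 * n - 6) (n - 3) : ℚ)
      + ((3 * (n : ℚ) - 4) / ((n : ℚ) - 1)) * (Nat.choose (2 * n - 2) (n - 2) : ℚ)
      + ∑ l ∈ Finset.Icc 4 (n - 1),
          ((3 * (l : ℚ) - 4) / (2 * (l : ℚ) - 2)) * (Nat.choose (2 * l - 2) (l - 2) : ℚ)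
            * (Nat.choose (2 * n - 2 * l) (n - l) : ℚ) =
    6 * 4 ^ (n - 2) - 2 * (Nat.choose (2 * n - 4) (n - 2) : ℚ) := by
  obtain ⟨m, rfl⟩ : ∃ m, n = m + 4 := ⟨n - 4, by omega⟩
  clear hn
  -- abbreviations
  set SA : ℕ := ∑ j ∈ Finset.Icc 3 (m+2), (2*j).choose (j-1) * centralBinom (m+3-j) with hSA
  set SB : ℕ := ∑ j ∈ Finset.Icc 3 (m+2), centralBinom j * centralBinom (m+3-j) with hSB
  set SC : ℕ := ∑ j ∈ Finset.Icc 3 (m+2), catalan j * centralBinom (m+3-j) with hSC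
  -- rewrite the head subtraction terms
  have e1 : 2 * (m+4) - 2 = 2 * (m+3) := by omega
  have e2 : m + 4 - 1 = m + 3 := by omega
  have e3 : 2 * (m+4) - 4 = 2 * (m+2) := by omega
  have e4 : m + 4 - 2 = m + 2 := by omega
  have e5 : 2 * (m+4) - 6 = 2 * (m+1) := by omega
  have e6 : m + 4 - 3 = m + 1 := by omega
  rw [e1, e2, e3, e4, e5, e6, ← Nat.centralBinom_eq_two_mul_choose,
    ← Nat.centralBinom_eq_two_mul_choose, ← Nat.centralBinom_eq_two_mul_choose]
  -- head term
  have hheadkey : centralBinom (m+3) * (m+3) = (2*(m+3)).choose (m+2) * (m+4) := by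
    have := Nat.choose_succ_right_eq (2*(m+3)) (m+2)
    have f1 : m + 2 + 1 = m + 3 := by omega
    have f2 : 2*(m+3) - (m+2) = m + 4 := by omega
    rw [f1, f2] at this
    rw [Nat.centralBinom_eq_two_mul_choose]
    exact this
  have hhead : ((3 * (((m+4:ℕ)):ℚ) - 4) / ((((m+4:ℕ)):ℚ) - 1)) * ((2*(m+3)).choose (m+2) : ℚ)
      = 4 * ((2*(m+3)).choose (m+2) : ℚ) - (centralBinom (m+3) : ℚ) := by
    push_cast
    have hc : (centralBinom (m+3) : ℚ) * ((m:ℚ)+3) = ((2*(m+3)).choose (m+2) : ℚ) * ((m:ℚ)+4) := by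
      exact_mod_cast congrArg (Nat.cast : ℕ → ℚ) hheadkey
    have hne : ((m:ℚ)+4) - 1 ≠ 0 := by
      have : (0:ℚ) < (m:ℚ) + 3 := by positivity
      intro h; rw [show ((m:ℚ)+4) - 1 = (m:ℚ)+3 by ring] at h; linarith
    field_simp
    ring_nf
    ring_nf at hc
    linarith [hc]
  -- reindex the sum
  have hmap : Finset.Icc 4 (m+3) = (Finset.Icc 3 (m+2)).map
      ⟨(· + 1), add_left_injective 1⟩ := by
    ext x
    simp only [Finset.mem_map, Finset.mem_Icc, Function.Embedding.coeFn_mk]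
    constructor
    · intro hx; exact ⟨x - 1, by omega, by omega⟩
    · rintro ⟨y, hy, rfl⟩; omega
  have hsum : ∑ l ∈ Finset.Icc 4 (m+3),
        ((3 * (l : ℚ) - 4) / (2 * (l : ℚ) - 2)) * (Nat.choose (2 * l - 2) (l - 2) : ℚ)
          * (Nat.choose (2 * (m+4) - 2 * l) (m + 4 - l) : ℚ)
      = ∑ j ∈ Finset.Icc 3 (m+2),
          (2 * ((2*j).choose (j-1) : ℚ) - (centralBinom j : ℚ) / 2)
            * (centralBinom (m+3-j) : ℚ) := by
    rw [hmap, Finset.sum_map]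
    apply Finset.sum_congr rfl
    intro j hj
    simp only [Function.Embedding.coeFn_mk]
    obtain ⟨k, rfl⟩ : ∃ k, j = k + 3 := by
      rw [Finset.mem_Icc] at hj; exact ⟨j - 3, by omega⟩
    have f1 : 2 * (k + 3 + 1) - 2 = 2 * (k + 3) := by omega
    have f2 : k + 3 + 1 - 2 = k + 2 := by omega
    have f3 : 2 * (m + 4) - 2 * (k + 3 + 1) = 2 * (m - k) := by omega
    have f4 : m + 4 - (k + 3 + 1) = m - k := by omega
    have f5 : m + 3 - (k + 3) = m - k := by omega
    have f6 : 2 * (k + 3) - 1 = 2 * k + 5 := by omega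
    have f7 : k + 3 - 1 = k + 2 := by omega
    rw [f1, f2, f3, f4, f5, f7, ← Nat.centralBinom_eq_two_mul_choose]
    have hkey : (2*(k+3)).choose (k+3) * (k+3) = (2*(k+3)).choose (k+2) * (k+4) := by
      have := Nat.choose_succ_right_eq (2*(k+3)) (k+2)
      have g1 : k + 2 + 1 = k + 3 := by omega
      have g2 : 2*(k+3) - (k+2) = k + 4 := by omega
      rw [g1, g2] at this
      exact this
    have hq : ((2*(k+3)).choose (k+3) : ℚ) * ((k:ℚ)+3)
        = ((2*(k+3)).choose (k+2) : ℚ) * ((k:ℚ)+4) := by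
      exact_mod_cast congrArg (Nat.cast : ℕ → ℚ) hkey
    have hne : 2 * ((k:ℚ)+3+1) - 2 ≠ 0 := by
      have : (0:ℚ) ≤ (k:ℚ) := Nat.cast_nonneg k
      intro h; linarith
    rw [Nat.centralBinom_eq_two_mul_choose]
    push_cast
    rw [div_mul_eq_mul_div, div_mul_eq_mul_div, div_eq_iff hne]
    have hcb : (centralBinom (k+3) : ℚ) = ((2*(k+3)).choose (k+3) : ℚ) := by
      rw [Nat.centralBinom_eq_two_mul_choose]
    linear_combination (((2*(m-k)).choose (m-k) : ℕ) : ℚ) * hq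
      + ((k:ℚ)+3) * (((2*(m-k)).choose (m-k) : ℕ) : ℚ) * hcb
  have hsplit : ∑ j ∈ Finset.Icc 3 (m+2),
      (2 * ((2*j).choose (j-1) : ℚ) - (centralBinom j : ℚ) / 2) * (centralBinom (m+3-j) : ℚ)
      = 2 * (SA : ℚ) - (SB : ℚ) / 2 := by
    rw [hSA, hSB]
    push_cast
    rw [Finset.mul_sum, Finset.sum_div, ← Finset.sum_sub_distrib]
    apply Finset.sum_congr rfl
    intros; ring
  -- numeric values
  have hc0 : centralBinom 0 = 1 := rfl
  have hc1 : centralBinom 1 = 2 := rfl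
  have hc2 : centralBinom 2 = 6 := rfl
  -- decompositions
  have dB := decomp (fun j => centralBinom j * centralBinom (m+3-j)) (m+3) (by omega)
  rw [conv1 (m+3)] at dB
  simp only [hc0, hc1, hc2, Nat.sub_zero, Nat.sub_self, one_mul, mul_one,
    show m+3-1 = m+2 from by omega, show m+3-2 = m+1 from by omega] at dB
  have dC := decomp (fun j => catalan j * centralBinom (m+3-j)) (m+3) (by omega)
  have cC := conv2 (m+3)
  rw [dC] at cC
  simp only [hc0, hc1, hc2, catalan_zero, catalan_one, catalan_two, Nat.sub_zero,
    Nat.sub_self, one_mul, mul_one,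
    show m+3-1 = m+2 from by omega, show m+3-2 = m+1 from by omega] at cC
  have hbc : SA + SC = SB := by
    rw [hSA, hSB, hSC, ← Finset.sum_add_distrib]
    apply Finset.sum_congr rfl
    intro j hj
    rw [Finset.mem_Icc] at hj
    have hb := bcat j (by omega)
    rw [← hb, Nat.add_mul]
    ring
  have q4 : catalan (m+3) + (2*(m+3)).choose (m+2) = centralBinom (m+3) := by
    have := bcat (m+3) (by omega)
    rwa [show m+3-1 = m+2 from by omega] at this
  have q5 : centralBinom (m+4) = 2 * centralBinom (m+3) + 2 * (2*(m+3)).choose (m+2) := by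
    have h := pascal2 (m+3)
    rwa [show (2*(m+3)).choose (m+3+1) = (2*(m+3)).choose (m+2) from
      Nat.choose_symm_of_eq_add (by omega)] at h
  -- cast everything to ℚ
  have qB : ((4:ℚ))^(m+3) = (centralBinom (m+3) : ℚ) + 2*(centralBinom (m+2) : ℚ)
      + 6*(centralBinom (m+1) : ℚ) + (SB : ℚ) + (centralBinom (m+3) : ℚ) := by
    exact_mod_cast congrArg (Nat.cast : ℕ → ℚ) dB
  have qC : 2 * ((centralBinom (m+3) : ℚ) + (centralBinom (m+2) : ℚ)
      + 2*(centralBinom (m+1) : ℚ) + (SC : ℚ) + (catalan (m+3) : ℚ))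
      = (centralBinom (m+3+1) : ℚ) := by
    exact_mod_cast congrArg (Nat.cast : ℕ → ℚ) cC
  have qbc : (SA : ℚ) + (SC : ℚ) = (SB : ℚ) := by exact_mod_cast congrArg (Nat.cast : ℕ → ℚ) hbc
  have qq4 : (catalan (m+3) : ℚ) + ((2*(m+3)).choose (m+2) : ℚ) = (centralBinom (m+3) : ℚ) := by
    exact_mod_cast congrArg (Nat.cast : ℕ → ℚ) q4
  have qq5 : (centralBinom (m+4) : ℚ)
      = 2 * (centralBinom (m+3) : ℚ) + 2 * ((2*(m+3)).choose (m+2) : ℚ) := by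
    exact_mod_cast congrArg (Nat.cast : ℕ → ℚ) q5
  have q6 : ((4:ℚ))^(m+3) = 4 * ((4:ℚ))^(m+2) := by
    rw [pow_succ]; ring
  have e7 : m + 4 - 2 = m + 2 := by omega
  rw [hsum, hsplit, hhead]
  have e8 : m + 3 + 1 = m + 4 := by omega
  rw [e8] at qC
  linarith [qB, qC, qbc, qq4, qq5, q6]
end
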